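/- Let (A, ∗, ⋎, ⋄, ▪) and (A, ∗', ⋎', ⋄', ▪') be two NS-Poisson algebra structures on the same vector space A over a field of characteristic 0, which are compatible in the sense that (A, ∗ + ∗', ⋎ + ⋎', ⋄ + ⋄', ▪ + ▪') is also an NS-Poisson algebra. Then the corresponding sub-adjacent Poisson algebras (A, ⊙, [-,-]) and (A, ⊙', [-,-]') are compatible, i.e. (A, ⊙ + ⊙', [-,-] + [-,-]') is a Poisson algebra. Here x ⊙ y = x∗y + y∗x + x⋎y and [x,y] = x⋄y − y⋄x + x▪y, and similarly for the primed operations. -/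
import Mathlib


variable (K : Type*) [Field K] [CharZero K]
variable {A V : Type*} [AddCommGroup A] [Module K A] [AddCommGroup V] [Module K V]

/-- A Poisson algebra structure on `A`: a commutative associative product `m` and a
Lie bracket `br` satisfying the Leibniz rule. -/
def IsPoisson (m br : A →ₗ[K] A →ₗ[K] A) : Prop :=
  (∀ x y, m x y = m y x) ∧
  (∀ x y z, m (m x y) z = m x (m y z)) ∧
  (∀ x y, br x y = - br y x) ∧
  (∀ x y z, br x (br y z) + br y (br z x) + br z (br x y) = 0) ∧
  (∀ x y z, br x (m y z) = m (br x y) z + m y (br x z))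

/-- An NS-commutative algebra structure on `A`. -/
def IsNSComm (s c : A →ₗ[K] A →ₗ[K] A) : Prop :=
  (∀ x y, c x y = c y x) ∧
  (∀ x y z, s x (s y z) = s (s x y + s y x + c x y) z) ∧
  (∀ x y z, s x (c y z) + c x (s y z + s z y + c y z)
      = s y (c x z) + c y (s x z + s z x + c x z))

/-- An NS-Lie algebra structure on `A`. -/
def IsNSLie (d b : A →ₗ[K] A →ₗ[K] A) : Prop :=
  (∀ x y, b x y = - b y x) ∧
  (∀ x y z, d x (d y z) - d (d x y) z - d y (d x z) + d (d y x) z = d (b x y) z) ∧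
  (∀ x y z,
    b x (d y z - d z y + b y z) + b y (d z x - d x z + b z x) + b z (d x y - d y x + b x y)
    + d x (b y z) + d y (b z x) + d z (b x y) = 0)

/-- An NS-Poisson algebra structure on `A`. -/
def IsNSPoisson (s c d b : A →ₗ[K] A →ₗ[K] A) : Prop :=
  IsNSComm K s c ∧ IsNSLie K d b ∧
  (∀ x y z, s (d x y - d y x + b x y) z = d x (s y z) - s y (d x z)) ∧
  (∀ x y z, d (s x y + s y x + c x y) z = s x (d y z) + s y (d x z)) ∧
  (∀ x y z, b x (s y z + s z y + c y z) + d x (c y z)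
      = c (d x y - d y x + b x y) z + s z (b x y)
        + c y (d x z - d z x + b x z) + s y (b x z))


theorem subadj_aux (s c d b : A →ₗ[K] A →ₗ[K] A) (h : IsNSPoisson K s c d b) :
    IsPoisson K (s + s.flip + c) (d - d.flip + b) := by
  obtain ⟨⟨hc, hA1, hA2⟩, ⟨hb, hL1, hL2⟩, hP1, hP2, hP3⟩ := h
  simp only [map_add, map_sub, LinearMap.add_apply, LinearMap.sub_apply]
    at hA1 hA2 hL1 hL2 hP1 hP2 hP3
  have hcs : ∀ u v w : A, s (c u v) w = s (c v u) w := fun u v w => by rw [hc]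
  have hcc : ∀ u v w : A, c u (c v w) = c u (c w v) := fun u v w => by rw [hc v w]
  have hsc : ∀ u v w : A, s u (c v w) = s u (c w v) := fun u v w => by rw [hc v w]
  refine ⟨fun x y => ?_, fun x y z => ?_, fun x y => ?_, fun x y z => ?_, fun x y z => ?_⟩ <;>
    simp only [LinearMap.add_apply, LinearMap.sub_apply, LinearMap.flip_apply, map_add,
      map_sub, map_neg, LinearMap.neg_apply]
  · linear_combination (norm := abel) hc x y
  · linear_combination (norm := abel) -hA1 x y z + hA1 y z x + hA2 z x y + hc (s x y) z +
      hc (s y x) z + hc (c x y) z + hcc x z y + hsc x z y + hA1 z x y - hA1 x z y +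
      hcs z x y + hA1 z y x - hA1 y z x + hcs z y x
  · linear_combination (norm := abel) hb x y
  · linear_combination (norm := abel) hL1 y z x + hL1 z x y + hL1 x y z + hL2 x y z
  · linear_combination (norm := abel) hP3 x y z - hP2 y z x - hP1 x y z - hP1 x z y

/-- If two NS-Poisson algebra structures on `A` are compatible (their sum is
again an NS-Poisson algebra), then the corresponding sub-adjacent Poisson algebras are
compatible: the sum of the two sub-adjacent structures is a Poisson algebra. -/
theorem compatible_subadjacent (s c d b s' c' d' b' : A →ₗ[K] A →ₗ[K] A)
    (h : IsNSPoisson K s c d b) (h' : IsNSPoisson K s' c' d' b')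
    (hsum : IsNSPoisson K (s + s') (c + c') (d + d') (b + b')) :
    IsPoisson K ((s + s.flip + c) + (s' + s'.flip + c'))
      ((d - d.flip + b) + (d' - d'.flip + b')) := by
  have e1 : ((s + s.flip + c) + (s' + s'.flip + c'))
      = ((s + s') + (s + s').flip + (c + c')) := by
    ext u v
    simp only [LinearMap.add_apply, LinearMap.flip_apply]
    abel
  have e2 : ((d - d.flip + b) + (d' - d'.flip + b'))
      = ((d + d') - (d + d').flip + (b + b')) := by
    ext u v
    simp only [LinearMap.add_apply, LinearMap.sub_apply, LinearMap.flip_apply]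
    abel
  rw [e1, e2]
  exact subadj_aux K (s + s') (c + c') (d + d') (b + b') hsum
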